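/- The polynomial R = sigma(M^(2h-1)) + W is a square, i.e. R = A^2 for some A in F_2[x]. Moreover, assuming in addition that sigma(M^(2h-2)) is not a square, the polynomial M^(2h-1) + W is not a square. -/

import Mathlib

open Polynomial

/-- `alpha l S` is the coefficient of `x^(deg S - l)` in `S`. -/
noncomputable def alpha (l : ℕ) (S : Polynomial (ZMod 2)) : ZMod 2 :=
  S.coeff (S.natDegree - l)

/-- `sigmaPow P n = 1 + P + ⋯ + P^n`, the sum of divisors of `P^n` for `P` irreducible. -/
noncomputable def sigmaPow (P : Polynomial (ZMod 2)) (n : ℕ) : Polynomial (ZMod 2) :=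
  ∑ i ∈ Finset.range (n + 1), P ^ i

/-! Since `sigma(M^(2h)) = sigma(M^(2h-1)) + M^(2h)`, in characteristic two both `R` and
`M^(2h-1) + W + sigma(M^(2h-2))` equal `U + M^(2h) + 1`. This is a sum of squares (`U` is one
because `u` and `v` are even), and sums of squares are squares in characteristic two. -/

theorem sigmaPow_succ (P : Polynomial (ZMod 2)) (n : ℕ) :
    sigmaPow P (n + 1) = sigmaPow P n + P ^ (n + 1) :=
  Finset.sum_range_succ _ _

namespace CharTwo

variable {R : Type*}

theorem isSquare_add [CommSemiring R] [CharP R 2] {a b : R} (ha : IsSquare a)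
    (hb : IsSquare b) : IsSquare (a + b) := by
  obtain ⟨x, rfl⟩ := ha
  obtain ⟨y, rfl⟩ := hb
  exact ⟨x + y, (add_mul_self x y).symm⟩

theorem isSquare_of_isSquare_add [CommRing R] [CharP R 2] {a b : R} (hb : IsSquare b)
    (hab : IsSquare (a + b)) : IsSquare a := by
  simpa only [CharTwo.add_cancel_right] using isSquare_add hab hb

end CharTwo

theorem stmt_4_general
    (h : ℕ) (hh : 2 ≤ h)
    (M : Polynomial (ZMod 2))
    (u v : ℕ)
    (hueven : Even u) (hveven : Even v)
    (U W R : Polynomial (ZMod 2))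
    (hU : U = X ^ u * (X + 1) ^ v)
    (hW : W = U + sigmaPow M (2 * h) + 1)
    (hR : R = sigmaPow M (2 * h - 1) + W)
    : (∃ A : Polynomial (ZMod 2), R = A ^ 2) ∧
      ((¬ ∃ A : Polynomial (ZMod 2), sigmaPow M (2 * h - 2) = A ^ 2) →
        ¬ ∃ A : Polynomial (ZMod 2), M ^ (2 * h - 1) + W = A ^ 2) := by
  obtain ⟨n, hn⟩ : ∃ n, 2 * h = n + 2 := ⟨2 * h - 2, by omega⟩
  rw [hn] at hW
  rw [show 2 * h - 1 = n + 1 by omega] at hR ⊢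
  rw [show 2 * h - 2 = n by omega]
  have two_eq_zero : (2 : Polynomial (ZMod 2)) = 0 := CharTwo.two_eq_zero
  have hsquare : IsSquare (U + M ^ (n + 2) + 1) :=
    CharTwo.isSquare_add (CharTwo.isSquare_add (hU ▸ (hueven.isSquare_pow X).mul (hveven.isSquare_pow _))
      ((hn ▸ even_two_mul h).isSquare_pow M)) IsSquare.one
  have hR_eq : R = U + M ^ (n + 2) + 1 := by
    rw [hR, hW]
    simp only [sigmaPow_succ]
    linear_combination (sigmaPow M n + M ^ (n + 1)) * two_eq_zero
  have hW_eq : M ^ (n + 1) + W = sigmaPow M n + (U + M ^ (n + 2) + 1) := by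
    rw [hW]
    simp only [sigmaPow_succ]
    linear_combination M ^ (n + 1) * two_eq_zero
  simp only [← isSquare_iff_exists_sq]
  exact ⟨hR_eq ▸ hsquare, fun hns hsq => hns (CharTwo.isSquare_of_isSquare_add hsquare (hW_eq ▸ hsq))⟩

theorem stmt_4
    (h a b : ℕ) (hh : 2 ≤ h) (hp : Nat.Prime (2 * h + 1))
    (ha : 1 ≤ a) (hb : 1 ≤ b) (hab5 : 5 ≤ a + b)
    (M : Polynomial (ZMod 2)) (hM : M = 1 + X ^ a * (X + 1) ^ b)
    (hMirr : Irreducible M)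
    (J : Finset ℕ) (aj bj : ℕ → ℕ)
    (haj : ∀ j ∈ J, 1 ≤ aj j) (hbj : ∀ j ∈ J, 1 ≤ bj j)
    (hMjirr : ∀ j ∈ J, Irreducible (1 + X ^ aj j * (X + 1) ^ bj j : Polynomial (ZMod 2)))
    (hdistinct : ∀ i ∈ J, ∀ j ∈ J, i ≠ j →
      (1 + X ^ aj i * (X + 1) ^ bj i : Polynomial (ZMod 2)) ≠
        1 + X ^ aj j * (X + 1) ^ bj j)
    (hfact : sigmaPow M (2 * h) = ∏ j ∈ J, (1 + X ^ aj j * (X + 1) ^ bj j))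
    (u v : ℕ) (hu : u = ∑ j ∈ J, aj j) (hv : v = ∑ j ∈ J, bj j)
    (hueven : Even u) (hveven : Even v)
    (U W R : Polynomial (ZMod 2)) (c : ℕ)
    (hU : U = X ^ u * (X + 1) ^ v)
    (hW : W = U + sigmaPow M (2 * h) + 1)
    (hc : c = 2 * h * (a + b) - W.natDegree)
    (hR : R = sigmaPow M (2 * h - 1) + W)
    : (∃ A : Polynomial (ZMod 2), R = A ^ 2) ∧
      ((¬ ∃ A : Polynomial (ZMod 2), sigmaPow M (2 * h - 2) = A ^ 2) →
        ¬ ∃ A : Polynomial (ZMod 2), M ^ (2 * h - 1) + W = A ^ 2) :=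
  stmt_4_general h hh M u v hueven hveven U W R hU hW hR
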